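/- arXiv:2002.01826 — 4 statements merged into one kernel-verified Lean document; each statement's English description precedes it below -/
import Mathlib

section
/- Let p > 2 and let Q(x) = ((p+1)/(2·cosh²(((p−1)/2)·x)))^(1/(p−1)). Then Q is positive, twice continuously differentiable on ℝ, and satisfies Q''(x) − Q(x) + Q(x)^p = 0 for all x ∈ ℝ. -/
/-- The ground state of the one-dimensional nonlinear Klein-Gordon equation. -/
noncomputable def Q (p : ℝ) (x : ℝ) : ℝ :=
  ((p + 1) / (2 * Real.cosh ((p - 1) / 2 * x) ^ 2)) ^ (1 / (p - 1))

/-!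
Writing `a = (p - 1) / 2` and `s = -2 / (p - 1)`, the ground state is a constant multiple of
`u = cosh (a x) ^ s`. Using `sinh² = cosh² - 1`, every power of `cosh (a x)` satisfies
`u'' = ((s a)² - s (s - 1) a² / cosh² (a x)) u`. Here `s a = -1` and `s (s - 1) a² = (p + 1) / 2`,
so `Q'' = (1 - (p + 1) / (2 cosh² (a x))) Q`, and the last factor is exactly `Q ^ (p - 1)`.
-/

open Real

section CoshMulRpow

variable (a s : ℝ)

theorem hasDerivAt_cosh_mul_rpow (x : ℝ) :
    HasDerivAt (fun x => cosh (a * x) ^ s) (s * a * sinh (a * x) * cosh (a * x) ^ (s - 1)) x := by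
  convert (hasDerivAt_const_mul a).cosh.rpow_const (p := s) (Or.inl (cosh_pos _).ne') using 1
  ring

theorem deriv_cosh_mul_rpow :
    deriv (fun x => cosh (a * x) ^ s) = fun x => s * a * sinh (a * x) * cosh (a * x) ^ (s - 1) :=
  funext fun x => (hasDerivAt_cosh_mul_rpow a s x).deriv

theorem deriv_deriv_cosh_mul_rpow (x : ℝ) :
    deriv (deriv fun x => cosh (a * x) ^ s) x =
      ((s * a) ^ 2 - s * (s - 1) * a ^ 2 / cosh (a * x) ^ 2) * cosh (a * x) ^ s := by
  rw [deriv_cosh_mul_rpow, ((((hasDerivAt_const_mul a).sinh (x := x)).const_mul (s * a)).fun_mul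
    (hasDerivAt_cosh_mul_rpow a (s - 1) x)).deriv]
  have hc : cosh (a * x) ≠ 0 := (cosh_pos _).ne'
  have hpow₁ : cosh (a * x) ^ (s - 1) = cosh (a * x) ^ (s - 2) * cosh (a * x) := by
    rw [← rpow_add_one hc]; ring_nf
  have hpow₀ : cosh (a * x) ^ s = cosh (a * x) ^ (s - 2) * cosh (a * x) ^ 2 := by
    rw [← rpow_natCast, ← rpow_add (cosh_pos _)]; norm_num
  rw [show s - 1 - 1 = s - 2 by ring, hpow₁, hpow₀]
  field_simp
  linear_combination -(s * (s - 1) * a ^ 2) * cosh_sq_sub_sinh_sq (a * x)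

theorem contDiff_cosh_mul_rpow {n : WithTop ℕ∞} : ContDiff ℝ n fun x => cosh (a * x) ^ s :=
  contDiff_iff_contDiffAt.2 fun _ =>
    (contDiff_cosh.comp (contDiff_const.mul contDiff_id)).contDiffAt.rpow_const_of_ne
      (cosh_pos _).ne'

end CoshMulRpow

theorem Q_pos {p : ℝ} (hp : -1 < p) (x : ℝ) : 0 < Q p x :=
  rpow_pos_of_pos (div_pos (by linarith) (by positivity)) _

theorem Q_rpow_sub_one {p : ℝ} (hp : -1 ≤ p) (hp₁ : p ≠ 1) (x : ℝ) :
    Q p x ^ (p - 1) = (p + 1) / (2 * cosh ((p - 1) / 2 * x) ^ 2) := by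
  rw [Q, ← rpow_mul (div_nonneg (by linarith) (by positivity)),
    one_div_mul_cancel (sub_ne_zero.2 hp₁), rpow_one]

theorem Q_eq_mul_cosh_mul_rpow {p : ℝ} (hp : -1 ≤ p) :
    Q p = fun x => ((p + 1) / 2) ^ (1 / (p - 1)) * cosh ((p - 1) / 2 * x) ^ (-2 / (p - 1)) := by
  funext x
  have hc := cosh_pos ((p - 1) / 2 * x)
  rw [Q, div_mul_eq_div_div, div_rpow (by linarith) (by positivity), div_eq_mul_inv,
    ← rpow_natCast, ← rpow_mul hc.le, ← rpow_neg hc.le]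
  ring_nf

theorem deriv_deriv_Q {p : ℝ} (hp : -1 ≤ p) (hp₁ : p ≠ 1) (x : ℝ) :
    deriv (deriv (Q p)) x = (1 - (p + 1) / (2 * cosh ((p - 1) / 2 * x) ^ 2)) * Q p x := by
  rw [Q_eq_mul_cosh_mul_rpow hp, deriv_const_mul_field', deriv_const_mul_field']
  beta_reduce
  rw [deriv_deriv_cosh_mul_rpow]
  have : p - 1 ≠ 0 := sub_ne_zero.2 hp₁
  field_simp
  ring

theorem ground_state_equation (p : ℝ) (hp : 2 < p) :
    (∀ x : ℝ, 0 < Q p x) ∧ ContDiff ℝ 2 (Q p) ∧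
      ∀ x : ℝ, deriv (deriv (Q p)) x - Q p x + Q p x ^ p = 0 := by
  have hp₁ : p ≠ 1 := by linarith
  refine ⟨Q_pos (by linarith), ?_, fun x => ?_⟩
  · rw [Q_eq_mul_cosh_mul_rpow (by linarith)]
    exact contDiff_const.mul (contDiff_cosh_mul_rpow _ _)
  · have hQp : Q p x ^ p = Q p x ^ (p - 1) * Q p x := by
      rw [← rpow_add_one (Q_pos (by linarith) x).ne', sub_add_cancel]
    rw [deriv_deriv_Q (by linarith) hp₁, hQp, Q_rpow_sub_one (by linarith) hp₁]
    ring
end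

section
/- Let p > 2. (a) For any real numbers 0 < m' < m there exists a constant C > 0 such that for all a, b ∈ ℝ, ∫_ℝ |Q(x−a)·Q(x−b)|^m dx ≤ C·e^(−m'·|a−b|). (b) For any m > 0 there exists a constant C > 0 such that for all a, b ∈ ℝ, ∫_ℝ |Q(x−a)|·|Q(x−b)|^(1+m) dx ≤ C·e^(−|a−b|). -/
/-! Since `2 cosh t ≥ e^{|t|}`, the ground state decays like `Q x ≤ K e^{-|x|}`. The triangle
inequality `γ |a - b| ≤ γ |x - a| + γ |x - b|` then trades part of the decay of a product of
translates for the factor `e^{-γ |a - b|}`, and what is left is a multiple of `e^{-δ |x - b|}` with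
`δ > 0`, whose integral `2 / δ` does not depend on `a` and `b`. -/

open MeasureTheory

open Real

lemma integral_exp_neg_mul_abs {δ : ℝ} (hδ : 0 < δ) : ∫ x, exp (-δ * |x|) = 2 / δ := by
  rw [integral_comp_abs (f := fun t => exp (-δ * t)), integral_exp_mul_Ioi (by linarith)]
  field_simp
  simp

lemma integrable_exp_neg_mul_abs {δ : ℝ} (hδ : 0 < δ) : Integrable fun x : ℝ => exp (-δ * |x|) :=
  Integrable.of_integral_ne_zero (by rw [integral_exp_neg_mul_abs hδ]; positivity)

lemma exp_neg_two_centers_le {α β γ : ℝ} (hγ : 0 ≤ γ) (hγα : γ ≤ α) (a b x : ℝ) :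
    exp (-(α * |x - a| + β * |x - b|)) ≤ exp (-γ * |a - b|) * exp (-(β - γ) * |x - b|) := by
  rw [← exp_add, exp_le_exp]
  have htri : |a - b| ≤ |x - a| + |x - b| := abs_sub_comm a x ▸ abs_sub_le a x b
  linarith [mul_le_mul_of_nonneg_left htri hγ, mul_le_mul_of_nonneg_right hγα (abs_nonneg (x - a))]

lemma integral_le_of_le_exp_neg_two_centers {f : ℝ → ℝ} {c α β γ a b : ℝ} (hc : 0 ≤ c)
    (hγ : 0 ≤ γ) (hγα : γ ≤ α) (hγβ : γ < β) (hf_nonneg : ∀ x, 0 ≤ f x)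
    (hf : ∀ x, f x ≤ c * exp (-(α * |x - a| + β * |x - b|))) :
    ∫ x, f x ≤ c * (2 / (β - γ)) * exp (-γ * |a - b|) := by
  have hδ : 0 < β - γ := sub_pos.2 hγβ
  have hbound (x : ℝ) : f x ≤ c * exp (-γ * |a - b|) * exp (-(β - γ) * |x - b|) :=
    (hf x).trans <| by
      rw [mul_assoc]; exact mul_le_mul_of_nonneg_left (exp_neg_two_centers_le hγ hγα a b x) hc
  calc ∫ x, f x ≤ ∫ x, c * exp (-γ * |a - b|) * exp (-(β - γ) * |x - b|) :=
        integral_mono_of_nonneg (.of_forall hf_nonneg)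
          (((integrable_exp_neg_mul_abs hδ).comp_sub_right b).const_mul _) (.of_forall hbound)
    _ = c * (2 / (β - γ)) * exp (-γ * |a - b|) := by
        rw [integral_const_mul, integral_sub_right_eq_self (fun y => exp (-(β - γ) * |y|)) b,
          integral_exp_neg_mul_abs hδ]
        ring

noncomputable def groundStateConst (p : ℝ) : ℝ := (2 * (p + 1)) ^ (1 / (p - 1))

lemma groundStateConst_pos {p : ℝ} (hp : -1 < p) : 0 < groundStateConst p :=
  rpow_pos_of_pos (by linarith) _

lemma exp_abs_le_two_cosh (t : ℝ) : exp |t| ≤ 2 * cosh t := by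
  rw [cosh_eq]
  rcases abs_cases t with ⟨h, _⟩ | ⟨h, _⟩ <;> rw [h] <;> linarith [exp_pos t, exp_pos (-t)]

lemma abs_Q_le {p : ℝ} (hp : 1 < p) (x : ℝ) : |Q p x| ≤ groundStateConst p * exp (-|x|) := by
  set t := (p - 1) / 2 * x
  have hp1 : 0 < p - 1 := sub_pos.2 hp
  have hexp : exp ((p - 1) * |x|) ≤ 4 * cosh t ^ 2 :=
    calc exp ((p - 1) * |x|) = exp |t| ^ 2 := by
          rw [← exp_nat_mul, abs_mul, abs_of_pos (half_pos hp1)]; ring_nf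
      _ ≤ (2 * cosh t) ^ 2 := pow_le_pow_left₀ (exp_pos _).le (exp_abs_le_two_cosh t) 2
      _ = 4 * cosh t ^ 2 := by ring
  have hbase : (p + 1) / (2 * cosh t ^ 2) ≤ 2 * (p + 1) * exp (-(p - 1) * |x|) := by
    rw [div_le_iff₀ (by positivity), neg_mul, exp_neg]
    field_simp
    linarith
  have hbase_nonneg : 0 ≤ (p + 1) / (2 * cosh t ^ 2) := div_nonneg (by linarith) (by positivity)
  calc |Q p x| = ((p + 1) / (2 * cosh t ^ 2)) ^ (1 / (p - 1)) :=
        abs_of_nonneg (rpow_nonneg hbase_nonneg _)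
    _ ≤ (2 * (p + 1) * exp (-(p - 1) * |x|)) ^ (1 / (p - 1)) :=
        rpow_le_rpow hbase_nonneg hbase (by positivity)
    _ = groundStateConst p * exp (-|x|) := by
        rw [mul_rpow (by linarith) (exp_pos _).le, ← exp_mul, groundStateConst]
        field_simp

lemma abs_Q_rpow_le {p s : ℝ} (hp : 1 < p) (hs : 0 ≤ s) (x : ℝ) :
    |Q p x| ^ s ≤ groundStateConst p ^ s * exp (-s * |x|) := by
  calc |Q p x| ^ s ≤ (groundStateConst p * exp (-|x|)) ^ s :=
        rpow_le_rpow (abs_nonneg _) (abs_Q_le hp x) hs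
    _ = _ := by
        rw [mul_rpow (groundStateConst_pos (by linarith)).le (exp_pos _).le, ← exp_mul]
        ring_nf

lemma integral_abs_Q_mul_Q_rpow_le {p m' m : ℝ} (hp : 1 < p) (hm' : 0 ≤ m') (hm'm : m' < m)
    (a b : ℝ) :
    ∫ x, |Q p (x - a) * Q p (x - b)| ^ m ≤
      (groundStateConst p ^ m) ^ 2 * (2 / (m - m')) * exp (-m' * |a - b|) := by
  have hm : 0 ≤ m := hm'.trans hm'm.le
  have hK : 0 ≤ groundStateConst p ^ m := rpow_nonneg (groundStateConst_pos (by linarith)).le _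
  refine integral_le_of_le_exp_neg_two_centers (by positivity) hm' hm'm.le hm'm
    (fun x => rpow_nonneg (abs_nonneg _) _) fun x => ?_
  rw [abs_mul, mul_rpow (abs_nonneg _) (abs_nonneg _)]
  calc _ ≤ (groundStateConst p ^ m * exp (-m * |x - a|)) *
        (groundStateConst p ^ m * exp (-m * |x - b|)) :=
        mul_le_mul (abs_Q_rpow_le hp hm _) (abs_Q_rpow_le hp hm _) (by positivity) (by positivity)
    _ = _ := by rw [mul_mul_mul_comm, ← exp_add]; ring_nf

lemma integral_abs_Q_mul_abs_Q_rpow_le {p m : ℝ} (hp : 1 < p) (hm : 0 < m) (a b : ℝ) :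
    ∫ x, |Q p (x - a)| * |Q p (x - b)| ^ (1 + m) ≤
      groundStateConst p ^ (2 + m) * (2 / m) * exp (-|a - b|) := by
  have hK := groundStateConst_pos (by linarith : -1 < p)
  calc _ ≤ groundStateConst p ^ (2 + m) * (2 / (1 + m - 1)) * exp (-1 * |a - b|) :=
        integral_le_of_le_exp_neg_two_centers (α := 1) (by positivity) zero_le_one le_rfl
          (by linarith) (fun x => mul_nonneg (abs_nonneg _) (rpow_nonneg (abs_nonneg _) _))
          fun x => ?_
    _ = _ := by rw [add_sub_cancel_left, neg_one_mul]
  calc _ ≤ (groundStateConst p * exp (-|x - a|)) *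
        (groundStateConst p ^ (1 + m) * exp (-(1 + m) * |x - b|)) :=
        mul_le_mul (abs_Q_le hp _) (abs_Q_rpow_le hp (by linarith) _) (by positivity)
          (by positivity)
    _ = _ := by
        rw [mul_mul_mul_comm, ← exp_add, ← rpow_one_add' hK.le (by linarith),
          show (1 : ℝ) + (1 + m) = 2 + m by ring]
        ring_nf

theorem ground_state_product_bounds (p : ℝ) (hp : 2 < p) :
    (∀ m' m : ℝ, 0 < m' → m' < m →
      ∃ C > 0, ∀ a b : ℝ,
        (∫ x : ℝ, |Q p (x - a) * Q p (x - b)| ^ m) ≤ C * Real.exp (-m' * |a - b|)) ∧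
    (∀ m : ℝ, 0 < m →
      ∃ C > 0, ∀ a b : ℝ,
        (∫ x : ℝ, |Q p (x - a)| * |Q p (x - b)| ^ (1 + m)) ≤ C * Real.exp (-|a - b|)) := by
  have hp1 : 1 < p := by linarith
  have hK := groundStateConst_pos (by linarith : -1 < p)
  refine ⟨fun m' m hm' hm'm => ⟨_, ?_, integral_abs_Q_mul_Q_rpow_le hp1 hm'.le hm'm⟩,
    fun m hm => ⟨_, ?_, integral_abs_Q_mul_abs_Q_rpow_le hp1 hm⟩⟩
  · have : 0 < m - m' := sub_pos.2 hm'm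
    positivity
  · positivity
end

section
/- Let K ≥ 2, α > 0 and κ > 0. Set γ_k = k·(K−k)/2 for k = 1, …, K−1. Then there exist unique real numbers τ₁, …, τ_K such that Σ_{k=1}^K τ_k = 0 and e^(−(τ_{k+1}−τ_k)) = (2α/κ)·γ_k for k = 1, …, K−1. Moreover, the functions ȳ_k(t) = (k − (K+1)/2)·log t + τ_k solve, for all t > 0: d/dt ȳ₁ = −(κ/(2α))·e^(−(ȳ₂−ȳ₁)); d/dt ȳ_k = (κ/(2α))·(e^(−(ȳ_k−ȳ_{k−1})) − e^(−(ȳ_{k+1}−ȳ_k))) for k = 2, …, K−1; and d/dt ȳ_K = (κ/(2α))·e^(−(ȳ_K−ȳ_{K−1})). -/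
/-!
Write `ȳ_k(t) = c_k log t + τ_k` with `c_k = k - (K+1)/2`. Consecutive slopes differ by one, so
`e^{-(ȳ_{k+1} - ȳ_k)} = e^{-(τ_{k+1} - τ_k)} / t = (2α/κ) γ_k / t`, and every equation of the system
reduces to `c_k = γ_{k-1} - γ_k` (with `γ_0 = γ_K = 0`), a polynomial identity in `k` and `K`.
The offsets `τ` are determined by their consecutive differences `-log((2α/κ) γ_k)` up to a common
shift, which the normalisation `∑ τ_k = 0` fixes.
-/

open Real Finset

namespace SolitonCenters

noncomputable def gamma (K : ℕ) (x : ℝ) : ℝ := x * (K - x) / 2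

theorem gamma_pos {K : ℕ} {x : ℝ} (h₀ : 0 < x) (hK : x < K) : 0 < gamma K x :=
  div_pos (mul_pos h₀ (sub_pos.2 hK)) two_pos

theorem exp_neg_eq_iff {x c : ℝ} (hc : 0 < c) : exp (-x) = c ↔ x = -log c := by
  rw [← exp_log hc, exp_eq_exp, log_exp, neg_eq_iff_eq_neg]

theorem eq_add_sum_range_of_succ_sub_eq {K : ℕ} {τ : Fin K → ℝ} {s : ℕ → ℝ}
    (hτ : ∀ j (h : j + 1 < K), τ ⟨j + 1, h⟩ - τ ⟨j, j.lt_of_succ_lt h⟩ = s j) (hK : 0 < K)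
    (k : Fin K) :
    τ k = τ ⟨0, hK⟩ + ∑ i ∈ range k, s i := by
  obtain ⟨k, hk⟩ := k
  induction k with
  | zero => simp
  | succ k ih =>
    rw [sum_range_succ, ← add_assoc, ← ih (by omega), ← hτ k hk]
    ring

theorem existsUnique_sum_eq_zero_of_succ_sub_eq {K : ℕ} (hK : 0 < K) (s : ℕ → ℝ) :
    ∃! τ : Fin K → ℝ, ∑ k, τ k = 0 ∧
      ∀ j (h : j + 1 < K), τ ⟨j + 1, h⟩ - τ ⟨j, j.lt_of_succ_lt h⟩ = s j := by
  set S : ℕ → ℝ := fun k => ∑ i ∈ range k, s i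
  have hK' : (K : ℝ) ≠ 0 := by positivity
  refine ⟨fun k => S k - (∑ m ∈ range K, S m) / K, ⟨?_, fun j h => ?_⟩, ?_⟩
  · simp only [sum_sub_distrib, Fin.sum_univ_eq_sum_range S, sum_const, card_univ,
      Fintype.card_fin, nsmul_eq_mul]
    field_simp
    ring
  · simp [S, sum_range_succ]
  · rintro τ ⟨hsum, hτ⟩
    have hτ₀ : τ ⟨0, hK⟩ = -(∑ m ∈ range K, S m) / K := by
      rw [sum_congr rfl fun k _ => eq_add_sum_range_of_succ_sub_eq hτ hK k, sum_add_distrib,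
        sum_const, card_univ, Fintype.card_fin, nsmul_eq_mul, Fin.sum_univ_eq_sum_range S] at hsum
      field_simp
      linarith
    funext k
    rw [eq_add_sum_range_of_succ_sub_eq hτ hK, hτ₀]
    ring

section Ansatz

variable {K : ℕ} {τ : Fin K → ℝ} {ybar : ℕ → ℝ → ℝ}

theorem hasDerivAt_of_eq_log_add
    (hy : ∀ k (h : k < K) t, ybar k t = ((k : ℝ) + 1 - ((K : ℝ) + 1) / 2) * log t + τ ⟨k, h⟩)
    {k : ℕ} (hk : k < K) {t : ℝ} (ht : t ≠ 0) :
    HasDerivAt (ybar k) (((k : ℝ) + 1 - ((K : ℝ) + 1) / 2) / t) t := by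
  rw [funext (hy k hk), div_eq_mul_inv]
  exact ((hasDerivAt_log ht).const_mul _).add_const _

theorem exp_neg_sub_of_eq_log_add
    (hy : ∀ k (h : k < K) t, ybar k t = ((k : ℝ) + 1 - ((K : ℝ) + 1) / 2) * log t + τ ⟨k, h⟩)
    {j : ℕ} (h : j + 1 < K) {t : ℝ} (ht : 0 < t) :
    exp (-(ybar (j + 1) t - ybar j t)) =
      exp (-(τ ⟨j + 1, h⟩ - τ ⟨j, j.lt_of_succ_lt h⟩)) / t := by
  have hdiff :
      ybar (j + 1) t - ybar j t = log t + (τ ⟨j + 1, h⟩ - τ ⟨j, j.lt_of_succ_lt h⟩) := by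
    rw [hy (j + 1) h, hy j (by omega)]
    push_cast
    ring
  rw [hdiff, neg_add, exp_add, exp_neg (log t), exp_log ht, inv_mul_eq_div]

theorem hasDerivAt_soliton_system {α κ : ℝ} (hα : α ≠ 0) (hκ : κ ≠ 0) (hK : 2 ≤ K)
    (hτ : ∀ j (h : j + 1 < K),
      exp (-(τ ⟨j + 1, h⟩ - τ ⟨j, j.lt_of_succ_lt h⟩)) = 2 * α / κ * gamma K (j + 1))
    (hy : ∀ k (h : k < K) t, ybar k t = ((k : ℝ) + 1 - ((K : ℝ) + 1) / 2) * log t + τ ⟨k, h⟩)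
    {t : ℝ} (ht : 0 < t) :
    HasDerivAt (ybar 0) (-(κ / (2 * α)) * exp (-(ybar 1 t - ybar 0 t))) t ∧
    (∀ k : ℕ, 0 < k → k + 1 < K →
      HasDerivAt (ybar k)
        ((κ / (2 * α)) * (exp (-(ybar k t - ybar (k - 1) t)) -
          exp (-(ybar (k + 1) t - ybar k t)))) t) ∧
    HasDerivAt (ybar (K - 1))
      ((κ / (2 * α)) * exp (-(ybar (K - 1) t - ybar (K - 2) t))) t := by
  have hrate : ∀ j (h : j + 1 < K),
      κ / (2 * α) * exp (-(ybar (j + 1) t - ybar j t)) = gamma K (j + 1) / t := by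
    intro j h
    rw [exp_neg_sub_of_eq_log_add hy h ht, hτ j h]
    field_simp
  have hder := fun k (hk : k < K) => hasDerivAt_of_eq_log_add hy hk ht.ne'
  refine ⟨?_, fun k hk₀ hkK => ?_, ?_⟩
  · convert hder 0 (by omega) using 1
    rw [neg_mul, hrate 0 (by omega)]
    simp only [gamma, CharP.cast_eq_zero]
    ring
  · obtain ⟨i, rfl⟩ : ∃ i, k = i + 1 := ⟨k - 1, by omega⟩
    convert hder (i + 1) (by omega) using 1
    rw [Nat.add_sub_cancel, mul_sub, hrate i (by omega), hrate (i + 1) hkK]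
    simp only [gamma]
    push_cast
    ring
  · obtain ⟨m, rfl⟩ : ∃ m, K = m + 2 := ⟨K - 2, by omega⟩
    rw [show m + 2 - 1 = m + 1 by omega, Nat.add_sub_cancel]
    convert hder (m + 1) (by omega) using 1
    rw [hrate m (by omega)]
    simp only [gamma]
    push_cast
    ring

end Ansatz

end SolitonCenters

open SolitonCenters

theorem soliton_centers_ODE_explicit_solution (K : ℕ) (hK : 2 ≤ K)
    (α κ : ℝ) (hα : 0 < α) (hκ : 0 < κ) :
    ∃ τ : Fin K → ℝ,
      ((∑ k, τ k = 0) ∧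
        (∀ j : ℕ, ∀ h : j + 1 < K,
          Real.exp (-(τ ⟨j + 1, h⟩ - τ ⟨j, by omega⟩)) =
            (2 * α / κ) * (((j : ℝ) + 1) * ((K : ℝ) - ((j : ℝ) + 1)) / 2))) ∧
      (∀ τ' : Fin K → ℝ,
        ((∑ k, τ' k = 0) ∧
          (∀ j : ℕ, ∀ h : j + 1 < K,
            Real.exp (-(τ' ⟨j + 1, h⟩ - τ' ⟨j, by omega⟩)) =
              (2 * α / κ) * (((j : ℝ) + 1) * ((K : ℝ) - ((j : ℝ) + 1)) / 2))) →
        τ' = τ) ∧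
      (∀ ybar : ℕ → ℝ → ℝ,
        (∀ k : ℕ, ∀ h : k < K, ∀ t : ℝ,
          ybar k t = ((k : ℝ) + 1 - ((K : ℝ) + 1) / 2) * Real.log t + τ ⟨k, h⟩) →
        ∀ t : ℝ, 0 < t →
          HasDerivAt (ybar 0) (-(κ / (2 * α)) * Real.exp (-(ybar 1 t - ybar 0 t))) t ∧
          (∀ k : ℕ, 0 < k → k + 1 < K →
            HasDerivAt (ybar k)
              ((κ / (2 * α)) * (Real.exp (-(ybar k t - ybar (k - 1) t)) -
                Real.exp (-(ybar (k + 1) t - ybar k t)))) t) ∧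
          HasDerivAt (ybar (K - 1))
            ((κ / (2 * α)) * Real.exp (-(ybar (K - 1) t - ybar (K - 2) t))) t) := by
  have hcoeff_pos : ∀ j, j + 1 < K → 0 < 2 * α / κ * gamma K (j + 1) := fun j h =>
    mul_pos (by positivity) (gamma_pos (by positivity) (by exact_mod_cast h))
  have hexp_iff : ∀ τ : Fin K → ℝ,
      (∀ j (h : j + 1 < K),
        Real.exp (-(τ ⟨j + 1, h⟩ - τ ⟨j, by omega⟩)) = 2 * α / κ * gamma K (j + 1)) ↔
      ∀ j (h : j + 1 < K),
        τ ⟨j + 1, h⟩ - τ ⟨j, by omega⟩ = -Real.log (2 * α / κ * gamma K (j + 1)) :=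
    fun τ => forall₂_congr fun j h => exp_neg_eq_iff (hcoeff_pos j h)
  obtain ⟨τ, ⟨hsum, hdiff⟩, huniq⟩ := existsUnique_sum_eq_zero_of_succ_sub_eq (K := K) (by omega)
    fun j => -Real.log (2 * α / κ * gamma K (j + 1))
  have hτ := (hexp_iff τ).2 hdiff
  exact ⟨τ, ⟨hsum, hτ⟩, fun τ' ⟨hsum', hτ'⟩ => huniq τ' ⟨hsum', (hexp_iff τ').1 hτ'⟩,
    fun _ hy _ ht => hasDerivAt_soliton_system hα.ne' hκ.ne' hK hτ hy ht⟩
end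

section
/- Let ε > 0 and a ∈ ℝ. There is no twice differentiable function M : [a, ∞) → ℝ with M(t) > 0 for all t ≥ a, such that M'(t) → +∞ as t → ∞ and (1+ε)·(M'(t))² ≤ M''(t)·M(t) for all t ≥ a. -/
/-!
The inequality `(1 + ε) M'² ≤ M'' M` says exactly that `M ^ (-ε)` is concave wherever `M > 0`.
Once `M' > 0`, this positive concave function has negative slope, so it lies below a line of
negative slope and becomes negative in finite time, which is absurd.
-/

open Filter Set

theorem HasDerivAt.rpow_const_deriv {M M' : ℝ → ℝ} {M'' p t : ℝ} (hM : HasDerivAt M (M' t) t)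
    (hM' : HasDerivAt M' M'' t) (ht : M t ≠ 0) :
    HasDerivAt (fun s => M' s * p * M s ^ (p - 1))
      (p * M t ^ (p - 2) * (M'' * M t + (p - 1) * M' t ^ 2)) t := by
  have hpow : M t ^ (p - 1) = M t ^ (p - 2) * M t := by
    rw [← Real.rpow_add_one ht]; ring_nf
  refine ((hM'.mul_const p).mul (hM.rpow_const (p := p - 1) (Or.inl ht))).congr_deriv ?_
  rw [hpow, show p - 1 - 1 = p - 2 by ring]
  ring

theorem concaveOn_rpow_neg_of_sq_deriv_le {D : Set ℝ} (hD : Convex ℝ D) {M M' M'' : ℝ → ℝ}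
    {ε : ℝ} (hε : 0 ≤ ε) (hpos : ∀ t ∈ D, 0 < M t) (hM : ∀ t ∈ D, HasDerivAt M (M' t) t)
    (hM' : ∀ t ∈ D, HasDerivAt M' (M'' t) t)
    (hineq : ∀ t ∈ D, (1 + ε) * M' t ^ 2 ≤ M'' t * M t) :
    ConcaveOn ℝ D (fun t => M t ^ (-ε)) := by
  have hM2 : ∀ t ∈ D, HasDerivAt (fun s => M' s * -ε * M s ^ (-ε - 1))
      (-ε * M t ^ (-ε - 2) * (M'' t * M t + (-ε - 1) * M' t ^ 2)) t := fun t ht =>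
    (hM t ht).rpow_const_deriv (hM' t ht) (hpos t ht).ne'
  refine concaveOn_of_hasDerivWithinAt2_nonpos hD
    (fun t ht => ((hM t ht).rpow_const (Or.inl (hpos t ht).ne')).continuousAt.continuousWithinAt)
    (fun t ht => ((hM t (interior_subset ht)).rpow_const
      (Or.inl (hpos t (interior_subset ht)).ne')).hasDerivWithinAt)
    (fun t ht => (hM2 t (interior_subset ht)).hasDerivWithinAt) fun t ht => ?_
  have htD := interior_subset ht
  have hfactor : 0 ≤ M'' t * M t + (-ε - 1) * M' t ^ 2 := by linarith [hineq t htD]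
  have hpow_pos := Real.rpow_pos_of_pos (hpos t htD) (-ε - 2)
  have : 0 ≤ ε * M t ^ (-ε - 2) * (M'' t * M t + (-ε - 1) * M' t ^ 2) := by positivity
  linarith

theorem ConcaveOn.exists_lt_of_hasDerivAt_neg {f : ℝ → ℝ} {f' b : ℝ}
    (hfc : ConcaveOn ℝ (Ici b) f) (hf : HasDerivAt f f' b) (hf' : f' < 0) (c : ℝ) :
    ∃ t ≥ b, f t < c := by
  have hf'pos : 0 < -f' := neg_pos.2 hf'
  set t := b + (|f b - c| + 1) / -f'
  have hbt : b < t := lt_add_of_pos_right b (by positivity)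
  have hslope := hfc.slope_le_of_hasDerivAt self_mem_Ici hbt.le hbt hf
  rw [slope_def_field, div_le_iff₀ (sub_pos.2 hbt)] at hslope
  refine ⟨t, hbt.le, ?_⟩
  have : f' * (t - b) = -(|f b - c| + 1) := by
    rw [add_sub_cancel_left, div_neg, mul_neg, mul_div_cancel₀ _ hf'.ne]
  linarith [le_abs_self (f b - c)]

theorem no_convex_blowup_function (ε a : ℝ) (hε : 0 < ε) :
    ¬ ∃ M M' M'' : ℝ → ℝ,
      (∀ t ≥ a, 0 < M t) ∧
      (∀ t ≥ a, HasDerivAt M (M' t) t) ∧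
      (∀ t ≥ a, HasDerivAt M' (M'' t) t) ∧
      Filter.Tendsto M' Filter.atTop Filter.atTop ∧
      (∀ t ≥ a, (1 + ε) * M' t ^ 2 ≤ M'' t * M t) := by
  rintro ⟨M, M', M'', hpos, hM, hM', htend, hineq⟩
  obtain ⟨b, hMb, hba⟩ := ((htend.eventually_gt_atTop 0).and (eventually_ge_atTop a)).exists
  have hIci : ∀ t ∈ Ici b, t ≥ a := fun t ht => hba.trans ht
  have hconc := concaveOn_rpow_neg_of_sq_deriv_le (convex_Ici b) hε.le
    (fun t ht => hpos t (hIci t ht)) (fun t ht => hM t (hIci t ht))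
    (fun t ht => hM' t (hIci t ht)) (fun t ht => hineq t (hIci t ht))
  have hslope : M' b * -ε * M b ^ (-ε - 1) < 0 :=
    mul_neg_of_neg_of_pos (mul_neg_of_pos_of_neg hMb (neg_neg_of_pos hε))
      (Real.rpow_pos_of_pos (hpos b hba) _)
  obtain ⟨t, htb, ht⟩ := hconc.exists_lt_of_hasDerivAt_neg
    ((hM b hba).rpow_const (Or.inl (hpos b hba).ne')) hslope 0
  exact ht.not_ge (Real.rpow_pos_of_pos (hpos t (hba.trans htb)) _).le
end
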